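/- arXiv:2406.19929 — 2 statements merged into one kernel-verified Lean document; each statement's English description precedes it below -/
import Mathlib

section
/- Let τ belong to class 𝒯 and let f: I → ℝ₊ be a nonnegative, non-increasing, integrable function. Then the function P_τ f given by P_τ f(x) = Σ_{i≥1} f(τ_i^{-1}(x)) / τ_i'(τ_i^{-1}(x)) · χ_{τ_i(I_i)}(x) is non-increasing on I. -/
open Set Filter MeasureTheory Topology

structure PCT where
  τ : ℝ → ℝ
  a : ℕ → ℝ
  b : ℕ → ℝ
  da : ℕ → ℝ
  maps_to : Set.MapsTo τ (Set.Icc 0 1) (Set.Icc 0 1)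
  lt : ∀ i, a i < b i
  sub : ∀ i, Set.Ioo (a i) (b i) ⊆ Set.Icc (0:ℝ) 1
  disj : Pairwise (Function.onFun Disjoint fun i => Set.Ioo (a i) (b i))
  null : volume (Set.Icc (0:ℝ) 1 \ ⋃ i, Set.Ioo (a i) (b i)) = 0
  mono : ∀ i, StrictMonoOn τ (Set.Ioo (a i) (b i))
  conv : ∀ i, ConvexOn ℝ (Set.Ioo (a i) (b i)) τ
  diff : ∀ i, ∀ x ∈ Set.Ioo (a i) (b i), DifferentiableAt ℝ τ x
  lim_zero : ∀ i, Filter.Tendsto τ (nhdsWithin (a i) (Set.Ioi (a i))) (nhds 0)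
  deriv_lim : ∀ i, Filter.Tendsto (deriv τ) (nhdsWithin (a i) (Set.Ioi (a i))) (nhds (da i))
  da_pos : ∀ i, 0 < da i
  sum_inv : Summable (fun i => 1 / da i)
  expand : (¬ AccPt (0:ℝ) (Filter.principal (Set.range a))) → ∃ i, a i = 0 ∧ 1 < da i

/-- The interval `(c,d)` follows a single sequence of branches under the first `n`
iterates of `τ`. -/
def IsBranchSeq (T : PCT) (n : ℕ) (c d : ℝ) : Prop :=
  c < d ∧ ∀ k < n, ∃ i, T.τ^[k] '' Set.Ioo c d ⊆ Set.Ioo (T.a i) (T.b i)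

/-- `(c,d)` is a maximal open interval on which `τ^n` is a single monotone branch,
i.e. an element of the partition `𝒫⁽ⁿ⁾`. -/
def IsBranchInterval (T : PCT) (n : ℕ) (c d : ℝ) : Prop :=
  IsBranchSeq T n c d ∧
    ∀ c' d', c' ≤ c → d ≤ d' → IsBranchSeq T n c' d' → c' = c ∧ d' = d

/-!
On each branch image `[0, cᵢ)` the inverse branch `φᵢ` is increasing, so `f ∘ φᵢ` decreases,
while `gᵢ = τᵢ' ∘ φᵢ` increases because `τᵢ` is convex, and stays above `τᵢ'(aᵢ) > 0`. Each
summand `f(φᵢ y) / gᵢ(y)` of `P_τ f` is therefore non-increasing on `[0, cᵢ)`; since the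
summands vanish beyond `cᵢ`, each one, and hence their sum, is non-increasing on `[0, 1]`.
-/

lemma ENNReal.ofReal_div_le_ofReal_div {a a' g g' : ℝ} (ha : a' ≤ a) (hg : 0 < g)
    (hgg' : g ≤ g') : ENNReal.ofReal (a' / g') ≤ ENNReal.ofReal (a / g) := by
  rcases le_or_gt 0 a with ha0 | ha0
  · exact ENNReal.ofReal_le_ofReal (div_le_div₀ ha0 ha hg hgg')
  · rw [ENNReal.ofReal_of_nonpos (div_nonpos_of_nonpos_of_nonneg (ha.trans ha0.le) (hg.trans_le hgg').le)]
    exact zero_le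

lemma monotoneOn_Ico_of_monotoneOn_Ioo {α β : Type*} [LinearOrder α] [Preorder β] {u : α → β}
    {a c : α} (hu : MonotoneOn u (Ioo a c)) (hua : ∀ y ∈ Ioo a c, u a ≤ u y) :
    MonotoneOn u (Ico a c) := by
  rcases lt_or_ge a c with hac | hca
  · rw [← Ioo_insert_left hac]
    exact monotoneOn_insert_iff.2
      ⟨fun y hy hya => absurd hy.1 hya.not_gt, fun y hy _ => hua y hy, hu⟩
  · exact fun x hx => absurd (hx.1.trans_lt hx.2) hca.not_gt

lemma AntitoneOn.indicator_Ico {α β : Type*} [Preorder α] [AddZeroClass β] [PartialOrder β]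
    [CanonicallyOrderedAdd β] {h : α → β} {a c : α} (hh : AntitoneOn h (Ico a c)) :
    AntitoneOn ((Ico a c).indicator h) (Ici a) := by
  intro x hx y _ hxy
  by_cases hy : y ∈ Ico a c
  · have hx' : x ∈ Ico a c := ⟨hx, hxy.trans_lt hy.2⟩
    rw [indicator_of_mem hy, indicator_of_mem hx']
    exact hh hx' hy hxy
  · rw [indicator_of_notMem hy]
    exact zero_le

namespace PCT

variable (T : PCT)

lemma a_mem_Icc (i : ℕ) : T.a i ∈ Icc (0:ℝ) 1 :=
  closure_minimal (T.sub i) isClosed_Icc <| by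
    rw [closure_Ioo (T.lt i).ne]
    exact left_mem_Icc.2 (T.lt i).le

lemma monotoneOn_deriv (i : ℕ) : MonotoneOn (deriv T.τ) (Ioo (T.a i) (T.b i)) :=
  (T.conv i).monotoneOn_deriv (T.diff i)

variable {i : ℕ} {c : ℝ} {φ g : ℝ → ℝ}

/-- `τᵢ'(aᵢ)` is the right limit at `aᵢ` of the non-decreasing `τᵢ'`. -/
lemma da_le_deriv {z : ℝ} (hz : z ∈ Ioo (T.a i) (T.b i)) : T.da i ≤ deriv T.τ z := by
  refine le_of_tendsto (T.deriv_lim i) ?_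
  filter_upwards [Ioo_mem_nhdsGT_of_mem (left_mem_Ico.2 hz.1)] with t ht
  exact T.monotoneOn_deriv i ⟨ht.1, ht.2.trans hz.2⟩ hz ht.2.le

lemma mapsTo_invBranch (hφmem : ∀ y ∈ Ioo 0 c, φ y ∈ Ioo (T.a i) (T.b i))
    (hφ0 : φ 0 = T.a i) : MapsTo φ (Ico 0 c) (Icc 0 1) := by
  intro y hy
  rcases hy.1.eq_or_lt with rfl | hy0
  · exact hφ0 ▸ T.a_mem_Icc i
  · exact T.sub i (hφmem y ⟨hy0, hy.2⟩)

lemma monotoneOn_invBranch (hφmem : ∀ y ∈ Ioo 0 c, φ y ∈ Ioo (T.a i) (T.b i))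
    (hφr : ∀ y ∈ Ioo 0 c, T.τ (φ y) = y) (hφ0 : φ 0 = T.a i) : MonotoneOn φ (Ico 0 c) := by
  refine monotoneOn_Ico_of_monotoneOn_Ioo (fun x hx y hy hxy => ?_)
    fun y hy => hφ0 ▸ (hφmem y hy).1.le
  rwa [← (T.mono i).le_iff_le (hφmem x hx) (hφmem y hy), hφr x hx, hφr y hy]

lemma da_le_derivComp (hφmem : ∀ y ∈ Ioo 0 c, φ y ∈ Ioo (T.a i) (T.b i))
    (hg : ∀ y ∈ Ioo 0 c, g y = deriv T.τ (φ y)) (hg0 : g 0 = T.da i) {y : ℝ}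
    (hy : y ∈ Ico 0 c) : T.da i ≤ g y := by
  rcases hy.1.eq_or_lt with rfl | hy0
  · exact hg0.ge
  · exact hg y ⟨hy0, hy.2⟩ ▸ T.da_le_deriv (hφmem y ⟨hy0, hy.2⟩)

lemma monotoneOn_derivComp (hφmem : ∀ y ∈ Ioo 0 c, φ y ∈ Ioo (T.a i) (T.b i))
    (hφr : ∀ y ∈ Ioo 0 c, T.τ (φ y) = y) (hφ0 : φ 0 = T.a i)
    (hg : ∀ y ∈ Ioo 0 c, g y = deriv T.τ (φ y)) (hg0 : g 0 = T.da i) :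
    MonotoneOn g (Ico 0 c) := by
  refine monotoneOn_Ico_of_monotoneOn_Ioo (fun x hx y hy hxy => ?_)
    fun y hy => hg0 ▸ T.da_le_derivComp hφmem hg hg0 (Ioo_subset_Ico_self hy)
  rw [hg x hx, hg y hy]
  exact T.monotoneOn_deriv i (hφmem x hx) (hφmem y hy) <|
    T.monotoneOn_invBranch hφmem hφr hφ0 (Ioo_subset_Ico_self hx) (Ioo_subset_Ico_self hy) hxy

lemma antitoneOn_branchTerm (hφmem : ∀ y ∈ Ioo 0 c, φ y ∈ Ioo (T.a i) (T.b i))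
    (hφr : ∀ y ∈ Ioo 0 c, T.τ (φ y) = y) (hφ0 : φ 0 = T.a i)
    (hg : ∀ y ∈ Ioo 0 c, g y = deriv T.τ (φ y)) (hg0 : g 0 = T.da i) {f : ℝ → ℝ}
    (hfm : AntitoneOn f (Icc 0 1)) :
    AntitoneOn (fun y => ENNReal.ofReal (f (φ y) / g y)) (Ico 0 c) := by
  intro x hx y hy hxy
  exact ENNReal.ofReal_div_le_ofReal_div
    (hfm (T.mapsTo_invBranch hφmem hφ0 hx) (T.mapsTo_invBranch hφmem hφ0 hy)
      (T.monotoneOn_invBranch hφmem hφr hφ0 hx hy hxy))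
    ((T.da_pos i).trans_le (T.da_le_derivComp hφmem hg hg0 hx))
    (T.monotoneOn_derivComp hφmem hφr hφ0 hg hg0 hx hy hxy)

end PCT

/-- `φ i` is the inverse branch `τᵢ⁻¹` (with `φ i 0 = aᵢ`), `c i = τᵢ(bᵢ)`, and `g i` is
`τᵢ' ∘ φ i` (with value `τᵢ'(aᵢ)` at `0`); the sum is taken in `[0,∞]`. -/
theorem frobeniusPerron_antitoneOn_general (T : PCT) (f : ℝ → ℝ)
    (hfm : AntitoneOn f (Set.Icc (0:ℝ) 1))
    (c : ℕ → ℝ)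
    (φ : ℕ → ℝ → ℝ)
    (hφmem : ∀ i, ∀ y ∈ Set.Ioo 0 (c i), φ i y ∈ Set.Ioo (T.a i) (T.b i))
    (hφr : ∀ i, ∀ y ∈ Set.Ioo 0 (c i), T.τ (φ i y) = y)
    (hφ0 : ∀ i, φ i 0 = T.a i)
    (g : ℕ → ℝ → ℝ)
    (hg : ∀ i, ∀ y ∈ Set.Ioo 0 (c i), g i y = deriv T.τ (φ i y))
    (hg0 : ∀ i, g i 0 = T.da i) :
    AntitoneOn
      (fun x => ∑' i : ℕ,
        Set.indicator (Set.Ico 0 (c i)) (fun y => ENNReal.ofReal (f (φ i y) / g i y)) x)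
      (Set.Icc (0:ℝ) 1) := by
  intro x hx y hy hxy
  exact ENNReal.tsum_le_tsum fun i =>
    (T.antitoneOn_branchTerm (hφmem i) (hφr i) (hφ0 i) (hg i) (hg0 i) hfm).indicator_Ico
      hx.1 hy.1 hxy

/-- Theorem 2.1.6 (1). Let `τ ∈ 𝒯` and let `f : I → ℝ₊` be a nonnegative,
non-increasing, integrable function. Then the function
`P_τ f(x) = Σ_{i≥1} f(τᵢ⁻¹ x) / τᵢ'(τᵢ⁻¹ x) · χ_{τᵢ(Iᵢ)}(x)` is non-increasing on `I`.
Here `φ i` is the inverse branch `τᵢ⁻¹` (with `φ i 0 = aᵢ`), `c i = τᵢ(bᵢ)` is the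
right endpoint of the branch image (defined by continuity), and `g i` is the branch
derivative composed with the inverse branch (with value `τᵢ'(aᵢ)` at `0`). The sum is
taken in `[0,∞]`. -/
theorem frobeniusPerron_antitoneOn (T : PCT) (f : ℝ → ℝ)
    (hf0 : ∀ x ∈ Set.Icc (0:ℝ) 1, 0 ≤ f x)
    (hfm : AntitoneOn f (Set.Icc (0:ℝ) 1))
    (hfi : MeasureTheory.IntegrableOn f (Set.Icc (0:ℝ) 1))
    (c : ℕ → ℝ)
    (hc : ∀ i, Filter.Tendsto T.τ (nhdsWithin (T.b i) (Set.Iio (T.b i))) (nhds (c i)))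
    (φ : ℕ → ℝ → ℝ)
    (hφmem : ∀ i, ∀ y ∈ Set.Ioo 0 (c i), φ i y ∈ Set.Ioo (T.a i) (T.b i))
    (hφr : ∀ i, ∀ y ∈ Set.Ioo 0 (c i), T.τ (φ i y) = y)
    (hφl : ∀ i, ∀ x ∈ Set.Ioo (T.a i) (T.b i), φ i (T.τ x) = x)
    (hφ0 : ∀ i, φ i 0 = T.a i)
    (g : ℕ → ℝ → ℝ)
    (hg : ∀ i, ∀ y ∈ Set.Ioo 0 (c i), g i y = deriv T.τ (φ i y))
    (hg0 : ∀ i, g i 0 = T.da i) :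
    AntitoneOn
      (fun x => ∑' i : ℕ,
        Set.indicator (Set.Ico 0 (c i)) (fun y => ENNReal.ofReal (f (φ i y) / g i y)) x)
      (Set.Icc (0:ℝ) 1) :=
  frobeniusPerron_antitoneOn_general T f hfm c φ hφmem hφr hφ0 g hg hg0
end

section
/- Let τ belong to class 𝒯. Then there exist constants 0 < α < 1 and D > 0 such that for every nonnegative, non-increasing, bounded integrable function f: I → ℝ₊, one has ‖P_τ f‖_∞ ≤ α·‖f‖_∞ + D·‖f‖_1. -/
open Set Filter MeasureTheory Topology

/-!
On a branch `Iᵢ = (aᵢ, bᵢ)` the convex map `τ` expands distances by at least `τ'(aᵢ)`, so a set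
`A` pulls back into `Iᵢ` with measure at most `m(A) / τ'(aᵢ)`. Hence if `f ≤ wᵢ` on `Iᵢ`, then
`∫_{τ⁻¹A} f ≤ (∑ᵢ wᵢ / τ'(aᵢ)) m(A)` for every `A`, and the defining property of `P_τ` turns this
into `‖P_τ f‖_∞ ≤ ∑ᵢ wᵢ / τ'(aᵢ)`. For non-increasing `f` one may take `wᵢ = ‖f‖₁ / ε` on every
branch with `aᵢ ≥ ε`, and `wᵢ = ‖f‖_∞` on the remaining branches `S`. It remains to choose `S`
with `∑_{i ∈ S} 1 / τ'(aᵢ) < 1` and `ε > 0`: if some `aᵢ = 0`, condition (2.3) makes that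
branch expanding and `S = {i}` works; otherwise `S` is a tail of the convergent series (2.2).
-/

open scoped ENNReal NNReal

lemma ConvexOn.le_deriv_of_tendsto_deriv_nhdsGT {f : ℝ → ℝ} {a b d x : ℝ}
    (hf : ConvexOn ℝ (Ioo a b) f) (hdiff : ∀ y ∈ Ioo a b, DifferentiableAt ℝ f y)
    (hlim : Tendsto (deriv f) (𝓝[>] a) (𝓝 d)) (hx : x ∈ Ioo a b) : d ≤ deriv f x := by
  refine le_of_tendsto hlim ?_
  filter_upwards [Ioo_mem_nhdsGT hx.1] with t ht
  exact hf.monotoneOn_deriv hdiff ⟨ht.1, ht.2.trans hx.2⟩ hx ht.2.le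

lemma ConvexOn.mul_sub_le_sub_of_tendsto_deriv_nhdsGT {f : ℝ → ℝ} {a b d x y : ℝ}
    (hf : ConvexOn ℝ (Ioo a b) f) (hdiff : ∀ z ∈ Ioo a b, DifferentiableAt ℝ f z)
    (hlim : Tendsto (deriv f) (𝓝[>] a) (𝓝 d)) (hx : x ∈ Ioo a b) (hy : y ∈ Ioo a b)
    (hxy : x ≤ y) : d * (y - x) ≤ f y - f x := by
  have hcont : ContinuousOn f (Ioo a b) := fun z hz =>
    (hdiff z hz).continuousAt.continuousWithinAt
  refine (convex_Ioo a b).mul_sub_le_image_sub_of_le_deriv hcont ?_ ?_ x hx y hy hxy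
  · rw [interior_Ioo]
    exact fun z hz => (hdiff z hz).differentiableWithinAt
  · rw [interior_Ioo]
    exact fun z hz => hf.le_deriv_of_tendsto_deriv_nhdsGT hdiff hlim hz

lemma Real.volume_le_mul_volume_image {s : Set ℝ} {g : ℝ → ℝ} {K : ℝ≥0}
    (h : ∀ x ∈ s, ∀ y ∈ s, dist x y ≤ K * dist (g x) (g y)) :
    volume s ≤ K * volume (g '' s) := by
  have hinj : InjOn g s := fun x hx y hy hxy =>
    dist_le_zero.1 (by simpa [hxy] using h x hx y hy)
  have hlip : LipschitzOnWith K (Function.invFunOn g s) (g '' s) := by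
    refine LipschitzOnWith.of_dist_le_mul ?_
    rintro _ ⟨x, hx, rfl⟩ _ ⟨y, hy, rfl⟩
    rw [hinj.leftInvOn_invFunOn hx, hinj.leftInvOn_invFunOn hy]
    exact h x hx y hy
  simpa only [hausdorffMeasure_real, ENNReal.rpow_one, hinj.leftInvOn_invFunOn.image_image]
    using hlip.hausdorffMeasure_image_le zero_le_one

lemma ae_ofReal_le_eLpNorm_top {α : Type*} [MeasurableSpace α] (f : α → ℝ) (μ : Measure α) :
    ∀ᵐ x ∂μ, ENNReal.ofReal (f x) ≤ eLpNorm f ⊤ μ := by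
  filter_upwards [enorm_ae_le_eLpNormEssSup f μ] with x hx
  exact (Real.ofReal_le_enorm _).trans (eLpNorm_exponent_top (f := f) ▸ hx)

lemma AntitoneOn.ofReal_le_eLpNorm_one_div {f : ℝ → ℝ} (hf : AntitoneOn f (Icc 0 1))
    {ε x : ℝ} (hε : 0 < ε) (hεx : ε ≤ x) (hx : x ≤ 1) :
    ENNReal.ofReal (f x) ≤ eLpNorm f 1 (volume.restrict (Icc 0 1)) / ENNReal.ofReal ε := by
  rw [ENNReal.le_div_iff_mul_le (Or.inl (by simpa using hε)) (Or.inl ENNReal.ofReal_ne_top),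
    eLpNorm_one_eq_lintegral_enorm]
  have hsub : Icc 0 ε ⊆ Icc (0 : ℝ) 1 := Icc_subset_Icc_right (hεx.trans hx)
  calc ENNReal.ofReal (f x) * ENNReal.ofReal ε = ∫⁻ _ in Icc 0 ε, ENNReal.ofReal (f x) := by
        rw [setLIntegral_const, Real.volume_Icc, sub_zero]
    _ ≤ ∫⁻ t in Icc 0 ε, ENNReal.ofReal (f t) :=
        setLIntegral_mono' measurableSet_Icc fun t ht => ENNReal.ofReal_le_ofReal
          (hf (hsub ht) ⟨hε.le.trans hεx, hx⟩ (ht.2.trans hεx))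
    _ ≤ ∫⁻ t in Icc 0 1, ENNReal.ofReal (f t) := lintegral_mono_set hsub
    _ ≤ ∫⁻ t in Icc 0 1, ‖f t‖ₑ := lintegral_mono fun t => Real.ofReal_le_enorm _

lemma eLpNorm_top_le_of_forall_setIntegral_le {α : Type*} [MeasurableSpace α] {μ : Measure α}
    [IsFiniteMeasure μ] {g : α → ℝ} (hg : Integrable g μ) {M : ℝ}
    (h0 : ∀ s, MeasurableSet s → μ s < ⊤ → 0 ≤ ∫ x in s, g x ∂μ)
    (hM : ∀ s, MeasurableSet s → μ s < ⊤ → ∫ x in s, g x ∂μ ≤ M * μ.real s) :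
    eLpNorm g ⊤ μ ≤ ENNReal.ofReal M := by
  have hle : g ≤ᵐ[μ] fun _ => M :=
    ae_le_of_forall_setIntegral_le hg (integrable_const M) fun s hs hμs => by
      rw [setIntegral_const, smul_eq_mul, mul_comm]
      exact hM s hs hμs
  rw [eLpNorm_exponent_top]
  refine eLpNormEssSup_le_of_ae_bound ?_
  filter_upwards [ae_nonneg_of_forall_setIntegral_nonneg hg h0, hle] with x hx0 hxM
  rwa [Real.norm_of_nonneg hx0]

lemma eLpNorm_top_le_of_lintegral_preimage_le {τ f g : ℝ → ℝ}
    (hf0 : ∀ x ∈ Icc (0 : ℝ) 1, 0 ≤ f x) (hfi : IntegrableOn f (Icc 0 1))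
    (hg : IntegrableOn g (Icc 0 1))
    (hgf : ∀ A : Set ℝ, MeasurableSet A → A ⊆ Icc 0 1 →
      ∫ x in A, g x = ∫ x in τ ⁻¹' A ∩ Icc 0 1, f x)
    {K : ℝ≥0∞} (hK : ∀ A : Set ℝ,
      ∫⁻ x in τ ⁻¹' A ∩ Icc 0 1, ENNReal.ofReal (f x) ≤ K * volume A) :
    eLpNorm g ⊤ (volume.restrict (Icc 0 1)) ≤ K := by
  rcases eq_or_ne K ⊤ with rfl | hK_top
  · exact le_top
  have hset : ∀ s, MeasurableSet s → ∫ x in s, g x ∂volume.restrict (Icc 0 1) =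
      (∫⁻ x in τ ⁻¹' (s ∩ Icc 0 1) ∩ Icc 0 1, ENNReal.ofReal (f x)).toReal := by
    intro s hs
    rw [Measure.restrict_restrict hs, hgf _ (hs.inter measurableSet_Icc) inter_subset_right]
    refine integral_eq_lintegral_of_nonneg_ae ?_
      (hfi.mono_set inter_subset_right).aestronglyMeasurable
    exact ae_restrict_of_ae_restrict_of_subset inter_subset_right
      ((ae_restrict_mem measurableSet_Icc).mono hf0)
  rw [← ENNReal.ofReal_toReal hK_top]
  refine eLpNorm_top_le_of_forall_setIntegral_le hg (fun s hs _ => ?_) fun s hs hμs => ?_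
  · rw [hset s hs]
    exact ENNReal.toReal_nonneg
  · rw [Measure.restrict_apply hs] at hμs
    rw [hset s hs, Measure.real, Measure.restrict_apply hs, ← ENNReal.toReal_mul]
    exact ENNReal.toReal_mono (ENNReal.mul_ne_top hK_top hμs.ne) (hK _)

namespace PCT

variable (T : PCT)

lemma a_nonneg (i : ℕ) : 0 ≤ T.a i := by
  have hIcc : Icc (T.a i) (T.b i) ⊆ Icc 0 1 := by
    simpa [closure_Ioo (T.lt i).ne] using isClosed_Icc.closure_subset_iff.2 (T.sub i)
  exact (hIcc (left_mem_Icc.2 (T.lt i).le)).1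

lemma b_le_a_of_a_le {i j : ℕ} (hij : i ≠ j) (h : T.a i ≤ T.a j) : T.b i ≤ T.a j := by
  have hdisj := Ioo_disjoint_Ioo.1 (T.disj hij)
  rw [max_eq_right h] at hdisj
  rcases min_le_iff.1 hdisj with hb | hb
  · exact hb
  · exact absurd hb (not_le.2 (T.lt j))

lemma a_injective : Function.Injective T.a := by
  intro i j hij
  by_contra hne
  exact (T.lt i).not_ge (hij ▸ T.b_le_a_of_a_le hne hij.le)

lemma summable_inv_da : Summable fun i => (T.da i)⁻¹ := by
  simpa only [one_div] using T.sum_inv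

lemma tsum_inv_da_pos : 0 < ∑' i, (T.da i)⁻¹ :=
  T.summable_inv_da.tsum_pos (fun i => (inv_pos.2 (T.da_pos i)).le) 0 (inv_pos.2 (T.da_pos 0))

lemma tsum_ofReal_inv_da : ∑' i, ENNReal.ofReal (T.da i)⁻¹ = ENNReal.ofReal (∑' i, (T.da i)⁻¹) :=
  (ENNReal.ofReal_tsum_of_nonneg (fun i => (inv_pos.2 (T.da_pos i)).le) T.summable_inv_da).symm

lemma mul_sub_le_sub (i : ℕ) {x y : ℝ} (hx : x ∈ Ioo (T.a i) (T.b i))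
    (hy : y ∈ Ioo (T.a i) (T.b i)) (hxy : x ≤ y) : T.da i * (y - x) ≤ T.τ y - T.τ x :=
  (T.conv i).mul_sub_le_sub_of_tendsto_deriv_nhdsGT (T.diff i) (T.deriv_lim i) hx hy hxy

lemma volume_le_inv_da_mul_volume_image (i : ℕ) {s : Set ℝ} (hs : s ⊆ Ioo (T.a i) (T.b i)) :
    volume s ≤ ENNReal.ofReal (T.da i)⁻¹ * volume (T.τ '' s) := by
  have hda := T.da_pos i
  refine Real.volume_le_mul_volume_image fun x hx y hy => ?_
  rw [Real.coe_toNNReal _ (inv_nonneg.2 hda.le)]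
  wlog hxy : x ≤ y generalizing x y
  · rw [dist_comm, dist_comm (T.τ x)]
    exact this y hy x hx (le_of_not_ge hxy)
  have hexp := T.mul_sub_le_sub i (hs hx) (hs hy) hxy
  rw [dist_comm, Real.dist_eq, abs_of_nonneg (sub_nonneg.2 hxy), dist_comm, Real.dist_eq,
    abs_of_nonneg (by nlinarith), inv_mul_eq_div, le_div_iff₀ hda]
  linarith

lemma lintegral_preimage_le (g : ℝ → ℝ≥0∞) (w : ℕ → ℝ≥0∞)
    (hw : ∀ i, ∀ᵐ x ∂volume.restrict (Ioo (T.a i) (T.b i)), g x ≤ w i) (A : Set ℝ) :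
    ∫⁻ x in T.τ ⁻¹' A ∩ Icc 0 1, g x ≤ (∑' i, w i * ENNReal.ofReal (T.da i)⁻¹) * volume A := by
  set S := T.τ ⁻¹' A ∩ Icc 0 1
  set U := ⋃ i, Ioo (T.a i) (T.b i)
  have hbranch : ∀ i, ∫⁻ x in S ∩ Ioo (T.a i) (T.b i), g x ≤
      w i * ENNReal.ofReal (T.da i)⁻¹ * volume A := by
    intro i
    calc ∫⁻ x in S ∩ Ioo (T.a i) (T.b i), g x ≤ ∫⁻ _ in S ∩ Ioo (T.a i) (T.b i), w i :=
          lintegral_mono_ae (ae_restrict_of_ae_restrict_of_subset inter_subset_right (hw i))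
      _ = w i * volume (S ∩ Ioo (T.a i) (T.b i)) := setLIntegral_const _ _
      _ ≤ w i * (ENNReal.ofReal (T.da i)⁻¹ * volume A) := by
          gcongr
          refine (T.volume_le_inv_da_mul_volume_image i inter_subset_right).trans ?_
          gcongr
          rintro _ ⟨x, hx, rfl⟩
          exact hx.1.1
      _ = w i * ENNReal.ofReal (T.da i)⁻¹ * volume A := (mul_assoc _ _ _).symm
  have hnull : volume (S \ U) = 0 :=
    measure_mono_null (sdiff_subset_sdiff_left inter_subset_right) T.null
  calc ∫⁻ x in S, g x = (∫⁻ x in S ∩ U, g x) + ∫⁻ x in S \ U, g x :=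
        (lintegral_inter_add_sdiff g S (.iUnion fun _ => measurableSet_Ioo)).symm
    _ = ∫⁻ x in ⋃ i, S ∩ Ioo (T.a i) (T.b i), g x := by
        simp only [setLIntegral_measure_zero _ _ hnull, add_zero, U, inter_iUnion]
    _ ≤ ∑' i, ∫⁻ x in S ∩ Ioo (T.a i) (T.b i), g x := lintegral_iUnion_le _ _
    _ ≤ ∑' i, w i * ENNReal.ofReal (T.da i)⁻¹ * volume A := ENNReal.tsum_le_tsum hbranch
    _ = (∑' i, w i * ENNReal.ofReal (T.da i)⁻¹) * volume A := ENNReal.tsum_mul_right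

lemma lintegral_preimage_le_of_antitoneOn {S : Set ℕ} {ε α : ℝ} (hε : 0 < ε)
    (hS : ∀ i ∉ S, ε ≤ T.a i)
    (hSsum : ∑' i, S.indicator (fun i => ENNReal.ofReal (T.da i)⁻¹) i ≤ ENNReal.ofReal α)
    {f : ℝ → ℝ} (hf : AntitoneOn f (Icc 0 1)) (A : Set ℝ) :
    ∫⁻ x in T.τ ⁻¹' A ∩ Icc 0 1, ENNReal.ofReal (f x) ≤
      (ENNReal.ofReal α * eLpNorm f ⊤ (volume.restrict (Icc 0 1)) +
        ENNReal.ofReal ((∑' i, (T.da i)⁻¹) / ε) * eLpNorm f 1 (volume.restrict (Icc 0 1))) *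
        volume A := by
  classical
  set c : ℕ → ℝ≥0∞ := fun i => ENNReal.ofReal (T.da i)⁻¹
  set Ninf := eLpNorm f ⊤ (volume.restrict (Icc 0 1))
  set N₁ := eLpNorm f 1 (volume.restrict (Icc 0 1))
  set w : ℕ → ℝ≥0∞ := fun i => if i ∈ S then Ninf else N₁ / ENNReal.ofReal ε
  have hw : ∀ i, ∀ᵐ x ∂volume.restrict (Ioo (T.a i) (T.b i)), ENNReal.ofReal (f x) ≤ w i := by
    intro i
    by_cases hi : i ∈ S
    · simp only [w, if_pos hi]
      exact ae_restrict_of_ae_restrict_of_subset (T.sub i) (ae_ofReal_le_eLpNorm_top f _)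
    · simp only [w, if_neg hi]
      filter_upwards [ae_restrict_mem measurableSet_Ioo] with x hx
      exact hf.ofReal_le_eLpNorm_one_div hε ((hS i hi).trans hx.1.le) (T.sub i hx).2
  have hwc : ∀ i, w i * c i ≤ Ninf * S.indicator c i + N₁ / ENNReal.ofReal ε * c i := by
    intro i
    by_cases hi : i ∈ S <;> simp [w, hi]
  calc _ ≤ (∑' i, w i * c i) * volume A := T.lintegral_preimage_le _ w hw A
    _ ≤ (Ninf * ENNReal.ofReal α + N₁ / ENNReal.ofReal ε * ENNReal.ofReal (∑' i, (T.da i)⁻¹)) *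
          volume A := by
        gcongr
        calc ∑' i, w i * c i
            ≤ ∑' i, (Ninf * S.indicator c i + N₁ / ENNReal.ofReal ε * c i) :=
              ENNReal.tsum_le_tsum hwc
          _ = Ninf * ∑' i, S.indicator c i + N₁ / ENNReal.ofReal ε * ∑' i, c i := by
              rw [ENNReal.tsum_add, ENNReal.tsum_mul_left, ENNReal.tsum_mul_left]
          _ ≤ _ := by
              rw [T.tsum_ofReal_inv_da]
              gcongr
    _ = _ := by
        rw [ENNReal.ofReal_div_of_pos hε, div_eq_mul_inv, div_eq_mul_inv]
        ring

lemma exists_branch_split_of_a_eq_zero {i₀ : ℕ} (h0 : T.a i₀ = 0) :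
    ∃ (S : Set ℕ) (ε α : ℝ), 0 < ε ∧ 0 < α ∧ α < 1 ∧ (∀ i ∉ S, ε ≤ T.a i) ∧
      ∑' i, S.indicator (fun i => ENNReal.ofReal (T.da i)⁻¹) i ≤ ENNReal.ofReal α := by
  have hb : 0 < T.b i₀ := h0 ▸ T.lt i₀
  have hgap : ∀ i ∉ ({i₀} : Set ℕ), T.b i₀ ≤ T.a i := fun i hi =>
    T.b_le_a_of_a_le (Ne.symm hi) (h0 ▸ T.a_nonneg i)
  have hacc : ¬ AccPt (0 : ℝ) (𝓟 (range T.a)) := by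
    rw [accPt_iff_nhds]
    push Not
    refine ⟨Iio (T.b i₀), Iio_mem_nhds hb, ?_⟩
    rintro _ ⟨hlt, i, rfl⟩
    by_contra hne
    exact (hgap i fun hi => hne (hi ▸ h0)).not_gt hlt
  obtain ⟨j, hj0, hj⟩ := T.expand hacc
  obtain rfl : j = i₀ := T.a_injective (hj0.trans h0.symm)
  refine ⟨{j}, T.b j, (T.da j)⁻¹, hb, inv_pos.2 (T.da_pos j), inv_lt_one_of_one_lt₀ hj, hgap, ?_⟩
  rw [← tsum_subtype]
  exact (tsum_singleton j fun i => ENNReal.ofReal (T.da i)⁻¹).le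

lemma exists_branch_split_of_a_pos (ha : ∀ i, 0 < T.a i) :
    ∃ (S : Set ℕ) (ε α : ℝ), 0 < ε ∧ 0 < α ∧ α < 1 ∧ (∀ i ∉ S, ε ≤ T.a i) ∧
      ∑' i, S.indicator (fun i => ENNReal.ofReal (T.da i)⁻¹) i ≤ ENNReal.ofReal α := by
  have hfin : ∑' i, ENNReal.ofReal (T.da i)⁻¹ ≠ ⊤ := by
    rw [T.tsum_ofReal_inv_da]
    exact ENNReal.ofReal_ne_top
  obtain ⟨s, hs⟩ := ((ENNReal.tendsto_tsum_compl_atTop_zero hfin).eventually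
    (gt_mem_nhds (by norm_num : (0 : ℝ≥0∞) < 2⁻¹))).exists
  obtain ⟨ε, hε, hεs⟩ := ((eventually_mem_nhdsWithin (a := (0 : ℝ)) (s := Ioi 0)).and
    ((eventually_all_finset s).2 fun i _ =>
      (eventually_le_nhds (ha i)).filter_mono nhdsWithin_le_nhds)).exists
  refine ⟨{i | i ∉ s}, ε, 2⁻¹, hε, by norm_num, by norm_num, fun i hi => hεs i (not_not.1 hi), ?_⟩
  rw [← tsum_subtype, ENNReal.ofReal_inv_of_pos two_pos, ENNReal.ofReal_ofNat]
  exact hs.le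

lemma exists_branch_split :
    ∃ (S : Set ℕ) (ε α : ℝ), 0 < ε ∧ 0 < α ∧ α < 1 ∧ (∀ i ∉ S, ε ≤ T.a i) ∧
      ∑' i, S.indicator (fun i => ENNReal.ofReal (T.da i)⁻¹) i ≤ ENNReal.ofReal α := by
  by_cases h : ∃ i, T.a i = 0
  · obtain ⟨i, hi⟩ := h
    exact T.exists_branch_split_of_a_eq_zero hi
  · push Not at h
    exact T.exists_branch_split_of_a_pos fun i => (T.a_nonneg i).lt_of_ne' (h i)

end PCT

/-- Theorem 2.1.6 (3). Let `τ ∈ 𝒯` with Frobenius–Perron operator `P`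
(characterized by `∫_A P f dm = ∫_{τ⁻¹ A} f dm`). Then there are constants `0 < α < 1`
and `D > 0` such that for every nonnegative, non-increasing, bounded integrable
`f : I → ℝ₊` one has `‖P f‖_∞ ≤ α ‖f‖_∞ + D ‖f‖₁`. -/
theorem frobeniusPerron_sup_bound (T : PCT) (P : (ℝ → ℝ) → (ℝ → ℝ))
    (hP : ∀ f : ℝ → ℝ, MeasureTheory.IntegrableOn f (Set.Icc (0:ℝ) 1) →
      MeasureTheory.IntegrableOn (P f) (Set.Icc (0:ℝ) 1) ∧
      ∀ A : Set ℝ, MeasurableSet A → A ⊆ Set.Icc (0:ℝ) 1 →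
        ∫ x in A, P f x = ∫ x in T.τ ⁻¹' A ∩ Set.Icc (0:ℝ) 1, f x) :
    ∃ α D : ℝ, 0 < α ∧ α < 1 ∧ 0 < D ∧
      ∀ f : ℝ → ℝ, (∀ x ∈ Set.Icc (0:ℝ) 1, 0 ≤ f x) →
        AntitoneOn f (Set.Icc (0:ℝ) 1) →
        MeasureTheory.IntegrableOn f (Set.Icc (0:ℝ) 1) →
        MeasureTheory.eLpNorm f ⊤ (volume.restrict (Set.Icc (0:ℝ) 1)) < ⊤ →
        MeasureTheory.eLpNorm (P f) ⊤ (volume.restrict (Set.Icc (0:ℝ) 1)) ≤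
          ENNReal.ofReal α * MeasureTheory.eLpNorm f ⊤ (volume.restrict (Set.Icc (0:ℝ) 1)) +
          ENNReal.ofReal D * MeasureTheory.eLpNorm f 1 (volume.restrict (Set.Icc (0:ℝ) 1)) := by
  obtain ⟨S, ε, α, hε, hα0, hα1, hS, hSsum⟩ := T.exists_branch_split
  refine ⟨α, (∑' i, (T.da i)⁻¹) / ε, hα0, hα1, div_pos T.tsum_inv_da_pos hε,
    fun f hf0 hf hfi _ => ?_⟩
  exact eLpNorm_top_le_of_lintegral_preimage_le hf0 hfi (hP f hfi).1 (hP f hfi).2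
    (T.lintegral_preimage_le_of_antitoneOn hε hS hSsum hf)
end
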